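/- Let G be a transitive permutation group on Ω and let B be a system of minimal blocks for G. Suppose x ∈ G satisfies supp(x) ⊆ B for some block B ∈ B, and let X = ⟨x^g : g ∈ G_B⟩ (the normal closure of x in the setwise stabiliser G_B, regarded as a permutation group on B). Then, up to permutation isomorphism, X^{|B|} ≤ G ≤ G_B^B ≀ G^B (the wreath product of the induced group on B with the induced group on the block system), with X^{|B|} contained in the base group of G_B^B ≀ G^B. -/

import Mathlib

open Equiv Pointwise

/-- A permutation group is transitive. -/
def IsTransitivePermGroup {Ω : Type*} (G : Subgroup (Equiv.Perm Ω)) : Prop :=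
  ∀ a b : Ω, ∃ g ∈ G, g a = b

/-- The element of the imprimitive wreath product determined by a function
`g : ι → Perm Δ` and a permutation `h` of the index set, acting on `Δ × ι` by
`(δ, i) ↦ (g i δ, h i)`. -/
def wreathPerm {Δ ι : Type*} (g : ι → Equiv.Perm Δ) (h : Equiv.Perm ι) :
    Equiv.Perm (Δ × ι) where
  toFun x := (g x.2 x.1, h x.2)
  invFun x := ((g (h⁻¹ x.2))⁻¹ x.1, h⁻¹ x.2)
  left_inv := by rintro ⟨d, i⟩; simp
  right_inv := by rintro ⟨d, i⟩; simp

/-- The imprimitive wreath product `Y ≀ H` of permutation groups, as a permutation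
group on `Δ × ι`.  (The defining set is already a subgroup, so taking the
subgroup closure does not change it.) -/
def wreathProduct {Δ ι : Type*} (Y : Subgroup (Equiv.Perm Δ))
    (H : Subgroup (Equiv.Perm ι)) : Subgroup (Equiv.Perm (Δ × ι)) :=
  Subgroup.closure {σ | ∃ (g : ι → Equiv.Perm Δ) (h : Equiv.Perm ι),
    (∀ i, g i ∈ Y) ∧ h ∈ H ∧ σ = wreathPerm g h}

/-- The copy `X^ι` of a power of `X` inside the base group of a wreath product,
as a permutation group on `Δ × ι`. -/
def basePower {Δ ι : Type*} (X : Subgroup (Equiv.Perm Δ)) :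
    Subgroup (Equiv.Perm (Δ × ι)) :=
  Subgroup.closure {σ | ∃ g : ι → Equiv.Perm Δ, (∀ i, g i ∈ X) ∧ σ = wreathPerm g 1}

/-- Transport of permutations along a bijection, as a group isomorphism. -/
def permMapEquiv {α β : Type*} (f : α ≃ β) : Equiv.Perm α ≃* Equiv.Perm β where
  toFun g := (f.symm.trans g).trans f
  invFun g := (f.trans g).trans f.symm
  left_inv g := by ext x; simp
  right_inv g := by ext x; simp
  map_mul' g₁ g₂ := by ext x; simp [Equiv.Perm.mul_apply]

/-- Transport of a permutation group along a bijection of the underlying sets.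
`mapPermGroup f G` is the permutation group on `β` corresponding to `G` under the
relabelling `f`; thus `G` and `mapPermGroup f G` are permutation isomorphic. -/
def mapPermGroup {α β : Type*} (f : α ≃ β) (G : Subgroup (Equiv.Perm α)) :
    Subgroup (Equiv.Perm β) :=
  Subgroup.map (permMapEquiv f).toMonoidHom G

/-- A partition of a set. -/
def IsPartition {Ω : Type*} (P : Set (Set Ω)) : Prop :=
  ∀ ω : Ω, ∃! B, B ∈ P ∧ ω ∈ B

/-- A block system for a permutation group: a `G`-invariant partition into sets of
size at least 2. -/
def IsBlockSystem {Ω : Type*} (G : Subgroup (Equiv.Perm Ω)) (P : Set (Set Ω)) : Prop :=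
  IsPartition P ∧ (∀ B ∈ P, 2 ≤ B.ncard) ∧
    ∀ g ∈ G, ∀ B ∈ P, (g : Equiv.Perm Ω) '' B ∈ P

/-- `P` is finer than `Q` (every block of `P` is contained in a block of `Q`). -/
def Finer {Ω : Type*} (P Q : Set (Set Ω)) : Prop := ∀ B ∈ P, ∃ C ∈ Q, B ⊆ C

/-- A system of minimal blocks: a block system such that the only block system finer
than it is itself. -/
def IsMinimalBlockSystem {Ω : Type*} (G : Subgroup (Equiv.Perm Ω))
    (P : Set (Set Ω)) : Prop :=
  IsBlockSystem G P ∧ ∀ Q, IsBlockSystem G Q → Finer Q P → Q = P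

/-- The setwise stabiliser `G_B` of a set of points, as a subgroup of `G`… here
realised inside `Perm Ω`. -/
def setStab {Ω : Type*} (G : Subgroup (Equiv.Perm Ω)) (B : Set Ω) :
    Subgroup (Equiv.Perm Ω) :=
  G ⊓ MulAction.stabilizer (Equiv.Perm Ω) B

/-- The permutation group induced on a set `B` by the elements of `G` preserving `B`.
(The defining set is a subgroup, so the closure does not change it.) -/
def inducedOnSet {Ω : Type*} (G : Subgroup (Equiv.Perm Ω)) (B : Set Ω) :
    Subgroup (Equiv.Perm B) :=
  Subgroup.closure {σ | ∃ (g : Equiv.Perm Ω) (hg : ∀ x, x ∈ B ↔ g x ∈ B),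
    g ∈ G ∧ σ = g.subtypePerm (fun x => (hg x).symm)}

/-- The action of a permutation of `Ω` on the subsets of `Ω`. -/
def permOnSets {Ω : Type*} (g : Equiv.Perm Ω) : Equiv.Perm (Set Ω) where
  toFun s := g '' s
  invFun s := g.symm '' s
  left_inv s := by simp [Set.image_image]
  right_inv s := by simp [Set.image_image]

/-- The permutation group `G^P` induced by `G` on an invariant family of blocks. -/
def inducedOnBlocks {Ω : Type*} (G : Subgroup (Equiv.Perm Ω)) (P : Set (Set Ω)) :
    Subgroup (Equiv.Perm P) :=
  Subgroup.closure {σ | ∃ (g : Equiv.Perm Ω)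
    (hg : ∀ s : Set Ω, s ∈ P ↔ (permOnSets g) s ∈ P), g ∈ G ∧ σ = (permOnSets g).subtypePerm (fun s => (hg s).symm)}

/-!
Pick, by transitivity, elements `t C ∈ G` carrying the block `B` onto each block `C`; then
`ω ∈ C ↦ ((t C)⁻¹ ω, C)` identifies `Ω` with `B × 𝓑`. Under this identification `u ∈ G` acts
on the block coordinate as `u` permutes the blocks, and on the fibre over `C` as
`(t (u C))⁻¹ * u * t C ∈ G_B`, so `G` lands in `G_B^B ≀ G^𝓑`. Since `supp x ⊆ B` and `G_B`
normalises the pointwise stabiliser of `Ω \ B`, every element of `X` fixes `Ω \ B` pointwise.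
Hence for `τ ∈ X^B` the conjugate `t C * τ * (t C)⁻¹ ∈ G` acts as `τ` on the fibre over `C` and
trivially elsewhere, and these elements generate `X^{|𝓑|}`.
-/

namespace IsPartition

variable {Ω : Type*} {P : Set (Set Ω)}

noncomputable def part (hP : IsPartition P) (ω : Ω) : P :=
  ⟨(hP ω).exists.choose, (hP ω).exists.choose_spec.1⟩

lemma mem_part (hP : IsPartition P) (ω : Ω) : ω ∈ (hP.part ω : Set Ω) :=
  (hP ω).exists.choose_spec.2

lemma eq_of_mem_of_mem (hP : IsPartition P) {ω : Ω} {C D : P} (hC : ω ∈ (C : Set Ω))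
    (hD : ω ∈ (D : Set Ω)) : C = D :=
  Subtype.ext ((hP ω).unique ⟨C.2, hC⟩ ⟨D.2, hD⟩)

lemma part_eq_of_mem (hP : IsPartition P) {ω : Ω} {C : P} (h : ω ∈ (C : Set Ω)) :
    hP.part ω = C :=
  hP.eq_of_mem_of_mem (hP.mem_part ω) h

end IsPartition

namespace IsBlockSystem

variable {Ω : Type*} {G : Subgroup (Perm Ω)} {P : Set (Set Ω)}

lemma nonempty (hP : IsBlockSystem G P) {C : Set Ω} (hC : C ∈ P) : C.Nonempty :=
  Set.nonempty_of_ncard_ne_zero (by have := hP.2.1 C hC; omega)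

lemma mem_iff_permOnSets_mem (hP : IsBlockSystem G P) {u : Perm Ω} (hu : u ∈ G) (s : Set Ω) :
    s ∈ P ↔ permOnSets u s ∈ P := by
  refine ⟨hP.2.2 u hu s, fun hs => ?_⟩
  simpa [permOnSets, Set.image_image] using hP.2.2 u⁻¹ (inv_mem hu) _ hs

lemma exists_transversal (hP : IsBlockSystem G P) (hG : IsTransitivePermGroup G) {B : Set Ω}
    (hB : B ∈ P) : ∃ t : P → Perm Ω, (∀ C, t C ∈ G) ∧ ∀ C : P, t C '' B = C := by
  obtain ⟨b, hb⟩ := hP.nonempty hB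
  suffices ∀ C : P, ∃ g ∈ G, g '' B = C by choose t htG ht using this; exact ⟨t, htG, ht⟩
  intro C
  obtain ⟨c, hc⟩ := hP.nonempty C.2
  obtain ⟨g, hgG, rfl⟩ := hG b c
  exact ⟨g, hgG, congrArg Subtype.val (hP.1.eq_of_mem_of_mem (C := ⟨_, hP.2.2 g hgG B hB⟩)
    (Set.mem_image_of_mem g hb) hc)⟩

end IsBlockSystem

lemma permMapEquiv_apply {α β : Type*} (f : α ≃ β) (g : Perm α) (b : β) :
    permMapEquiv f g b = f (g (f.symm b)) :=
  rfl

lemma wreathPerm_apply {Δ ι : Type*} (g : ι → Perm Δ) (h : Perm ι) (p : Δ × ι) :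
    wreathPerm g h p = (g p.2 p.1, h p.2) :=
  rfl

section Transversal

variable {Ω : Type*} {P : Set (Set Ω)} {B : Set Ω} {t : P → Perm Ω}

lemma apply_mem_iff_of_image_eq (ht : ∀ C : P, t C '' B = C) (C : P) (a : Ω) :
    t C a ∈ (C : Set Ω) ↔ a ∈ B := by
  rw [← ht C, (t C).injective.mem_set_image]

lemma inv_apply_mem_iff_of_image_eq (ht : ∀ C : P, t C '' B = C) (C : P) (ω : Ω) :
    (t C)⁻¹ ω ∈ B ↔ ω ∈ (C : Set Ω) := by
  rw [← ht C, Set.mem_image_equiv]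
  rfl

noncomputable def transversalEquiv (hP : IsPartition P) (ht : ∀ C : P, t C '' B = C) :
    Ω ≃ B × P where
  toFun ω := (⟨(t (hP.part ω))⁻¹ ω, (inv_apply_mem_iff_of_image_eq ht _ ω).2 (hP.mem_part ω)⟩,
    hP.part ω)
  invFun p := t p.2 p.1
  left_inv ω := by simp
  right_inv := by
    rintro ⟨b, C⟩
    have hC : hP.part (t C b) = C :=
      hP.part_eq_of_mem ((apply_mem_iff_of_image_eq ht C b).2 b.2)
    ext <;> simp [hC]

variable (hP : IsPartition P) (ht : ∀ C : P, t C '' B = C)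

@[simp]
lemma transversalEquiv_symm_apply (p : B × P) : (transversalEquiv hP ht).symm p = t p.2 p.1 :=
  rfl

@[simp]
lemma transversalEquiv_apply (C : P) (b : B) : transversalEquiv hP ht (t C b) = (b, C) :=
  (Equiv.eq_symm_apply _).1 rfl

end Transversal

section WreathDecomposition

variable {Ω : Type*} {P : Set (Set Ω)} {B : Set Ω} {t : P → Perm Ω}

def blockPerm {u : Perm Ω} (hu : ∀ s, s ∈ P ↔ permOnSets u s ∈ P) : Perm P :=
  (permOnSets u).subtypePerm fun s => (hu s).symm

lemma blockPerm_apply_coe {u : Perm Ω} (hu : ∀ s, s ∈ P ↔ permOnSets u s ∈ P) (C : P) :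
    (blockPerm hu C : Set Ω) = u '' C :=
  rfl

lemma blockComponent_mem_iff (ht : ∀ C : P, t C '' B = C) {u : Perm Ω}
    (hu : ∀ s, s ∈ P ↔ permOnSets u s ∈ P) (C : P) (a : Ω) :
    ((t (blockPerm hu C))⁻¹ * u * t C) a ∈ B ↔ a ∈ B := by
  rw [Perm.mul_apply, Perm.mul_apply, inv_apply_mem_iff_of_image_eq ht, blockPerm_apply_coe,
    u.injective.mem_set_image, apply_mem_iff_of_image_eq ht]

def blockComponent (ht : ∀ C : P, t C '' B = C) {u : Perm Ω}
    (hu : ∀ s, s ∈ P ↔ permOnSets u s ∈ P) (C : P) : Perm B :=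
  ((t (blockPerm hu C))⁻¹ * u * t C).subtypePerm (blockComponent_mem_iff ht hu C)

lemma permMapEquiv_transversalEquiv (hP : IsPartition P) (ht : ∀ C : P, t C '' B = C)
    {u : Perm Ω} (hu : ∀ s, s ∈ P ↔ permOnSets u s ∈ P) :
    permMapEquiv (transversalEquiv hP ht) u =
      wreathPerm (blockComponent ht hu) (blockPerm hu) := by
  ext1 ⟨b, C⟩
  have hut : u (t C b) = t (blockPerm hu C) (blockComponent ht hu C b) := by
    simp [blockComponent]
  rw [permMapEquiv_apply, transversalEquiv_symm_apply, hut, transversalEquiv_apply,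
    wreathPerm_apply]

lemma permMapEquiv_transversalEquiv_conj_ofSubtype (hP : IsPartition P)
    (ht : ∀ C : P, t C '' B = C) [DecidablePred (· ∈ B)] [DecidableEq P] (C : P) (τ : Perm B) :
    permMapEquiv (transversalEquiv hP ht) (t C * Perm.ofSubtype τ * (t C)⁻¹) =
      wreathPerm (Pi.mulSingle C τ) 1 := by
  ext1 ⟨b, D⟩
  rw [permMapEquiv_apply, transversalEquiv_symm_apply, wreathPerm_apply]
  obtain rfl | hDC := eq_or_ne D C
  · simp [Perm.ofSubtype_apply_of_mem τ]
  · have hb : (t C)⁻¹ (t D b) ∉ B := by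
      rw [inv_apply_mem_iff_of_image_eq ht]
      exact fun h => hDC (hP.eq_of_mem_of_mem ((apply_mem_iff_of_image_eq ht D b).2 b.2) h)
    rw [Perm.mul_apply, Perm.mul_apply, Perm.ofSubtype_apply_of_not_mem τ hb,
      Perm.inv_def, apply_symm_apply, transversalEquiv_apply, Pi.mulSingle_eq_of_ne hDC,
      Perm.one_apply]
    rfl

end WreathDecomposition

section Subgroups

variable {Ω : Type*} {B : Set Ω}

lemma mem_fixingSubgroup_compl_of_support_subset {x : Perm Ω} (hx : {ω | x ω ≠ ω} ⊆ B) :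
    x ∈ fixingSubgroup (Perm Ω) Bᶜ :=
  (mem_fixingSubgroup_iff _).2 fun _ hω => not_not.1 fun h => hω (hx h)

lemma conj_mem_fixingSubgroup_compl {g y : Perm Ω} (hg : g ∈ MulAction.stabilizer (Perm Ω) B)
    (hy : y ∈ fixingSubgroup (Perm Ω) Bᶜ) : g * y * g⁻¹ ∈ fixingSubgroup (Perm Ω) Bᶜ := by
  refine (mem_fixingSubgroup_iff _).2 fun ω hω => ?_
  have hgω : g⁻¹ ω ∈ Bᶜ := fun h => hω ((MulAction.mem_stabilizer_set.1 (inv_mem hg) ω).1 h)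
  rw [Perm.smul_def, Perm.mul_apply, Perm.mul_apply, ← Perm.smul_def y,
    (mem_fixingSubgroup_iff _).1 hy _ hgω, Perm.inv_def, apply_symm_apply]

lemma ofSubtype_mem_of_mem_inducedOnSet [DecidablePred (· ∈ B)] {H : Subgroup (Perm Ω)}
    (hH : H ≤ fixingSubgroup (Perm Ω) Bᶜ) {σ : Perm B} (hσ : σ ∈ inducedOnSet H B) :
    Perm.ofSubtype σ ∈ H := by
  suffices inducedOnSet H B ≤ H.comap Perm.ofSubtype from this hσ
  refine (Subgroup.closure_le _).2 ?_
  rintro _ ⟨g, hg, hgH, rfl⟩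
  rw [SetLike.mem_coe, Subgroup.mem_comap, Perm.ofSubtype_subtypePerm]
  · exact hgH
  · exact fun a ha => not_not.1 fun haB => ha ((mem_fixingSubgroup_iff _).1 (hH hgH) a haB)

end Subgroups

def wreathBaseHom {Δ ι : Type*} : (ι → Perm Δ) →* Perm (Δ × ι) where
  toFun g := wreathPerm g 1
  map_one' := rfl
  map_mul' _ _ := rfl

lemma basePower_le {Δ ι : Type*} [Finite ι] [DecidableEq ι] {X : Subgroup (Perm Δ)}
    {K : Subgroup (Perm (Δ × ι))} (h : ∀ i, ∀ τ ∈ X, wreathPerm (Pi.mulSingle i τ) 1 ∈ K) :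
    basePower X ≤ K := by
  have hpi : Subgroup.pi Set.univ (fun _ => X) ≤ K.comap wreathBaseHom :=
    Subgroup.pi_le_iff.2 fun i => Subgroup.map_le_iff_le_comap.2 fun τ hτ => h i τ hτ
  refine (Subgroup.closure_le _).2 ?_
  rintro _ ⟨g, hg, rfl⟩
  exact hpi fun i _ => hg i

section Embedding

variable {Ω : Type*} {G : Subgroup (Perm Ω)} {P : Set (Set Ω)} {B : Set Ω} {t : P → Perm Ω}

lemma basePower_le_mapPermGroup_transversalEquiv [Finite P] (hP : IsPartition P)
    (htG : ∀ C, t C ∈ G) (ht : ∀ C : P, t C '' B = C) {X : Subgroup (Perm Ω)} (hXG : X ≤ G)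
    (hXB : X ≤ fixingSubgroup (Perm Ω) Bᶜ) :
    basePower (inducedOnSet X B) ≤ mapPermGroup (transversalEquiv hP ht) G := by
  classical
  refine basePower_le fun C τ hτ => ?_
  rw [← permMapEquiv_transversalEquiv_conj_ofSubtype hP ht]
  exact Subgroup.mem_map_of_mem _ <|
    mul_mem (mul_mem (htG C) (hXG (ofSubtype_mem_of_mem_inducedOnSet hXB hτ))) (inv_mem (htG C))

lemma mapPermGroup_transversalEquiv_le_wreathProduct (hP : IsBlockSystem G P)
    (htG : ∀ C, t C ∈ G) (ht : ∀ C : P, t C '' B = C) :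
    mapPermGroup (transversalEquiv hP.1 ht) G ≤
      wreathProduct (inducedOnSet (setStab G B) B) (inducedOnBlocks G P) := by
  rintro _ ⟨u, huG, rfl⟩
  have hu := hP.mem_iff_permOnSets_mem huG
  refine Subgroup.subset_closure ⟨blockComponent ht hu, blockPerm hu, fun C => ?_,
    Subgroup.subset_closure ⟨u, hu, huG, rfl⟩, permMapEquiv_transversalEquiv hP.1 ht hu⟩
  refine Subgroup.subset_closure ⟨_, fun a => (blockComponent_mem_iff ht hu C a).symm, ?_, rfl⟩
  exact Subgroup.mem_inf.2 ⟨mul_mem (mul_mem (inv_mem (htG _)) huG) (htG C),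
    MulAction.mem_stabilizer_set.2 (blockComponent_mem_iff ht hu C)⟩

end Embedding

theorem statement_8_general {Ω : Type} [Fintype Ω] (G : Subgroup (Equiv.Perm Ω))
    (hG : IsTransitivePermGroup G) (P : Set (Set Ω)) (hP : IsMinimalBlockSystem G P)
    (x : Equiv.Perm Ω) (hx : x ∈ G) (B : Set Ω) (hB : B ∈ P)
    (hsupp : {ω : Ω | x ω ≠ ω} ⊆ B) :
    ∃ f : Ω ≃ B × P,
      basePower (inducedOnSet (Subgroup.closure {y | ∃ g ∈ setStab G B, y = g * x * g⁻¹}) B)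
          ≤ mapPermGroup f G ∧
      mapPermGroup f G ≤ wreathProduct (inducedOnSet (setStab G B) B) (inducedOnBlocks G P) := by
  obtain ⟨t, htG, ht⟩ := hP.1.exists_transversal hG hB
  have hxB := mem_fixingSubgroup_compl_of_support_subset hsupp
  have hXG : Subgroup.closure {y | ∃ g ∈ setStab G B, y = g * x * g⁻¹} ≤ G := by
    rw [Subgroup.closure_le]
    rintro _ ⟨g, ⟨hgG, -⟩, rfl⟩
    exact mul_mem (mul_mem hgG hx) (inv_mem hgG)
  have hXB : Subgroup.closure {y | ∃ g ∈ setStab G B, y = g * x * g⁻¹} ≤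
      fixingSubgroup (Perm Ω) Bᶜ := by
    rw [Subgroup.closure_le]
    rintro _ ⟨g, ⟨-, hgB⟩, rfl⟩
    exact conj_mem_fixingSubgroup_compl hgB hxB
  exact ⟨transversalEquiv hP.1.1 ht,
    basePower_le_mapPermGroup_transversalEquiv hP.1.1 htG ht hXG hXB,
    mapPermGroup_transversalEquiv_le_wreathProduct hP.1 htG ht⟩

/-- Lemma `lem:theOne`.  If `G` is transitive on `Ω`, `𝓑` is a
system of minimal blocks for `G`, and `x ∈ G` has support contained in a block
`B ∈ 𝓑`, then, with `X = ⟨x^g : g ∈ G_B⟩` regarded as a permutation group on `B`,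
up to permutation isomorphism `X^{|𝓑|} ≤ G ≤ G_B^B ≀ G^𝓑`, with `X^{|𝓑|}` inside
the base group of the wreath product. -/
theorem statement_8 {Ω : Type} [Fintype Ω] [DecidableEq Ω] (G : Subgroup (Equiv.Perm Ω))
    (hG : IsTransitivePermGroup G) (P : Set (Set Ω)) (hP : IsMinimalBlockSystem G P)
    (x : Equiv.Perm Ω) (hx : x ∈ G) (B : Set Ω) (hB : B ∈ P)
    (hsupp : {ω : Ω | x ω ≠ ω} ⊆ B) :
    ∃ f : Ω ≃ B × P,
      basePower (inducedOnSet (Subgroup.closure {y | ∃ g ∈ setStab G B, y = g * x * g⁻¹}) B)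
          ≤ mapPermGroup f G ∧
      mapPermGroup f G ≤ wreathProduct (inducedOnSet (setStab G B) B) (inducedOnBlocks G P) :=
  statement_8_general G hG P hP x hx B hB hsupp
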